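/- arXiv:1212.0128 — 6 statements merged into one kernel-verified Lean document; each statement's English description precedes it below -/
import Mathlib

section
/- Every additive subgroup G of ℚ that contains 1 is equal to Q(k) for some sequence k : ℕ → ℕ∞, where Q(k) = { p/q ∈ ℚ : q = ∏_{i=1}^m p_i^{n_i} for some m and exponents n_i with n_i < k_i } and p_i denotes the i-th prime. -/
/-- For a sequence `k : ℕ → ℕ∞` and `pᵢ` the `i`-th prime, `QSet k` is the set of rationals
expressible as a fraction `p / q` (not necessarily in lowest terms) whose denominator is a
product `q = ∏_{i<m} pᵢ ^ nᵢ` for some `m` and exponents `nᵢ` with `(nᵢ : ℕ∞) < kᵢ`. -/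
def QSet (k : ℕ → ℕ∞) : Set ℚ :=
  {x | ∃ (p : ℤ) (m : ℕ) (n : ℕ → ℕ),
    (∀ i < m, (n i : ℕ∞) < k i) ∧
    x = (p : ℚ) / ∏ i ∈ Finset.range m, (Nat.nth Nat.Prime i : ℚ) ^ n i}

/-!
By Bézout, when `1 ∈ G` a rational `a / b` in lowest terms lies in `G` exactly when `1 / b` does,
and `1 / b ∈ G` exactly when `1 / p ^ v_p(b) ∈ G` for every prime `p`: divisors of admissible
denominators are admissible since `1 / d = c • (1 / (c * d))`, and coprime admissible denominators
multiply by Bézout again. Hence `G` is determined by the sets `Sᵢ = {n | 1 / pᵢ ^ n ∈ G}`, which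
are initial segments of `ℕ`, and `kᵢ` is the cardinality of `Sᵢ` in `ℕ∞`.
-/

theorem IsLowerSet.natCast_lt_encard_iff {S : Set ℕ} (hS : IsLowerSet S) {n : ℕ} :
    (n : ℕ∞) < S.encard ↔ n ∈ S := by
  constructor
  · intro h
    by_contra hn
    have hsub : S ⊆ {i | i < n} := fun i hi => lt_of_not_ge fun hni => hn (hS hni hi)
    exact (Set.encard_le_encard hsub).trans_eq (Set.Nat.encard_range n) |>.not_gt h
  · intro hn
    calc (n : ℕ∞) < (n + 1 : ℕ) := mod_cast n.lt_succ_self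
      _ = {i | i < n + 1}.encard := (Set.Nat.encard_range _).symm
      _ ≤ S.encard := Set.encard_le_encard fun i hi => hS (Nat.lt_succ_iff.mp hi) hn

theorem Nat.prod_range_nth_prime_pow_factorization {d : ℕ} (hd : d ≠ 0) :
    ∏ i ∈ Finset.range (d + 1), nth Prime i ^ d.factorization (nth Prime i) = d := by
  have hinj := nth_injective infinite_setOfPred_prime
  rw [← Finset.prod_image (f := fun p => p ^ d.factorization p) hinj.injOn,
    ← Finsupp.prod_of_support_subset _ _ _ fun _ _ => pow_zero _,
    prod_factorization_pow_eq_self hd]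
  intro p hp
  rw [support_factorization] at hp
  refine Finset.mem_image.mpr ⟨count Prime p, Finset.mem_range.mpr ?_,
    nth_count (prime_of_mem_primeFactors hp)⟩
  exact lt_succ_of_le ((count_le _).trans (le_of_mem_primeFactors hp))

open Function

theorem Nat.pairwise_coprime_nth_prime_pow (s : Set ℕ) (n : ℕ → ℕ) :
    s.Pairwise (Coprime on fun i => nth Prime i ^ n i) := fun i _ j _ hij =>
  coprime_pow_primes _ _ (prime_nth_prime i) (prime_nth_prime j)
    ((nth_injective infinite_setOfPred_prime).ne hij)

namespace AddSubgroup

section Field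

variable {K : Type*} [Field K] {G : AddSubgroup K}

theorem inv_natCast_mul_mem_of_coprime {a b : ℕ} (hab : a.Coprime b)
    (ha : (a : K)⁻¹ ∈ G) (hb : (b : K)⁻¹ ∈ G) : ((a * b : ℕ) : K)⁻¹ ∈ G := by
  rcases eq_or_ne (a : K) 0 with ha0 | ha0
  · simp [ha0]
  rcases eq_or_ne (b : K) 0 with hb0 | hb0
  · simp [hb0]
  obtain ⟨u, v, huv⟩ := hab.isCoprime
  have huv' : (u : K) * a + v * b = 1 := mod_cast congrArg (Int.cast : ℤ → K) huv
  have key : ((a * b : ℕ) : K)⁻¹ = u • (b : K)⁻¹ + v • (a : K)⁻¹ := by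
    rw [zsmul_eq_mul, zsmul_eq_mul, Nat.cast_mul]
    field_simp
    linear_combination -huv'
  rw [key]
  exact add_mem (zsmul_mem hb u) (zsmul_mem ha v)

theorem inv_natCast_prod_mem {ι : Type*} {s : Finset ι} {f : ι → ℕ}
    (hf : (s : Set ι).Pairwise (Nat.Coprime on f)) (h1 : (1 : K) ∈ G)
    (hs : ∀ i ∈ s, (f i : K)⁻¹ ∈ G) : ((∏ i ∈ s, f i : ℕ) : K)⁻¹ ∈ G := by
  classical
  induction s using Finset.induction_on with
  | empty => simpa using h1
  | insert j s hj ih =>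
    rw [Finset.coe_insert, Set.pairwise_insert_of_symm] at hf
    rw [Finset.prod_insert hj]
    exact inv_natCast_mul_mem_of_coprime
      (Nat.Coprime.prod_right fun i hi => hf.2 i hi (ne_of_mem_of_not_mem hi hj).symm)
      (hs j (Finset.mem_insert_self j s)) (ih hf.1 fun i hi => hs i (Finset.mem_insert_of_mem hi))

theorem inv_natCast_mem_of_dvd [CharZero K] {d e : ℕ} (hde : d ∣ e) (he : e ≠ 0)
    (h : (e : K)⁻¹ ∈ G) : (d : K)⁻¹ ∈ G := by
  obtain ⟨c, rfl⟩ := hde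
  have hc : (c : K) ≠ 0 := by exact_mod_cast right_ne_zero_of_mul he
  have key : (d : K)⁻¹ = c • ((d * c : ℕ) : K)⁻¹ := by
    rw [nsmul_eq_mul, Nat.cast_mul, mul_inv, mul_left_comm, mul_inv_cancel₀ hc, mul_one]
  exact key ▸ nsmul_mem h c

end Field

theorem inv_den_mem {G : AddSubgroup ℚ} (h1 : (1 : ℚ) ∈ G) {x : ℚ} (hx : x ∈ G) :
    (x.den : ℚ)⁻¹ ∈ G := by
  obtain ⟨u, v, huv⟩ := x.isCoprime_num_den
  have key : (x.den : ℚ)⁻¹ = u • x + v • (1 : ℚ) := by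
    have huv' : (u : ℚ) * (x * x.den) + v * x.den = 1 := by
      rw [Rat.mul_den_eq_num]
      exact_mod_cast huv
    rw [zsmul_eq_mul, zsmul_eq_mul, mul_one]
    field_simp
    linear_combination -huv'
  exact key ▸ add_mem (zsmul_mem hx u) (zsmul_mem h1 v)

end AddSubgroup

/-- Every additive subgroup of ℚ containing 1 equals  for some . -/
theorem subgroup_of_rat_eq_qset (G : AddSubgroup ℚ) (h1 : (1 : ℚ) ∈ G) :
    ∃ k : ℕ → ℕ∞, (G : Set ℚ) = QSet k := by
  set p : ℕ → ℕ := Nat.nth Nat.Prime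
  set S : ℕ → Set ℕ := fun i => {n | ((p i ^ n : ℕ) : ℚ)⁻¹ ∈ G}
  have hS : ∀ i, IsLowerSet (S i) := fun i _ _ hba hb => G.inv_natCast_mem_of_dvd
    (pow_dvd_pow _ hba) (pow_ne_zero _ (Nat.prime_nth_prime i).ne_zero) hb
  have hcast : ∀ (m : ℕ) (n : ℕ → ℕ),
      ∏ i ∈ Finset.range m, (p i : ℚ) ^ n i = ((∏ i ∈ Finset.range m, p i ^ n i : ℕ) : ℚ) := by
    simp only [Nat.cast_prod, Nat.cast_pow, implies_true]
  refine ⟨fun i => (S i).encard, Set.Subset.antisymm ?_ ?_⟩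
  · intro x hx
    refine ⟨x.num, x.den + 1, fun i => x.den.factorization (p i), fun i _ => ?_, ?_⟩
    · rw [(hS i).natCast_lt_encard_iff]
      exact G.inv_natCast_mem_of_dvd (Nat.ordProj_dvd _ _) x.den_nz (G.inv_den_mem h1 hx)
    · rw [hcast, Nat.prod_range_nth_prime_pow_factorization x.den_nz, Rat.num_div_den]
  · rintro _ ⟨a, m, n, hn, rfl⟩
    have hinv := G.inv_natCast_prod_mem (Nat.pairwise_coprime_nth_prime_pow _ n) h1 fun i hi =>
      (hS i).natCast_lt_encard_iff.mp (hn i (Finset.mem_range.mp hi))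
    rw [hcast, div_eq_mul_inv, ← zsmul_eq_mul]
    exact zsmul_mem hinv a
end

section
/- Let n : ℕ → ℕ+ be a sequence of positive integers and let p_j denote the j-th prime. Define k_j ∈ ℕ∞ by k_j = 1 + ∑_{i} v_{p_j}(n_i), where v_{p_j}(n_i) is the p_j-adic valuation of n_i and the sum is taken in ℕ∞ (so k_j = ∞ if p_j divides infinitely many n_i to unbounded total order). Then G(n) = Q(k) as subgroups of ℚ. -/
open Finset

/-- For a sequence `n : ℕ → ℕ+`, `GSet n` is the set of rationals expressible as a fraction
`p / q` (not necessarily in lowest terms) whose denominator is a product of an initial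
segment of the sequence: `q = ∏_{i<k} n i` for some `k ≥ 0` (the empty product being `1`). -/
def GSet (n : ℕ → ℕ+) : Set ℚ :=
  {x | ∃ (p : ℤ) (k : ℕ), x = (p : ℚ) / ∏ i ∈ Finset.range k, ((n i : ℕ) : ℚ)}

/- ### Auxiliary lemmas -/

lemma myENat.hasSum (f : ℕ → ℕ∞) : HasSum f (⨆ s : Finset ℕ, ∑ i ∈ s, f i) :=
  hasSum_of_isLUB _ isLUB_iSup

lemma myENat.sum_le_tsum (f : ℕ → ℕ∞) (s : Finset ℕ) : ∑ i ∈ s, f i ≤ ∑' i, f i := by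
  rw [(myENat.hasSum f).tsum_eq]
  exact le_iSup (fun t : Finset ℕ => ∑ i ∈ t, f i) s

lemma myENat.exists_range_sum (f : ℕ → ℕ) (a : ℕ) (h : (a : ℕ∞) ≤ ∑' i, (f i : ℕ∞)) :
    ∃ k, a ≤ ∑ i ∈ range k, f i := by
  rcases Nat.eq_zero_or_pos a with rfl | ha
  · exact ⟨0, Nat.zero_le _⟩
  · rw [(myENat.hasSum fun i => (f i : ℕ∞)).tsum_eq] at h
    have hlt : ((a - 1 : ℕ) : ℕ∞) < ⨆ s : Finset ℕ, ∑ i ∈ s, (f i : ℕ∞) :=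
      lt_of_lt_of_le (by exact_mod_cast Nat.sub_lt ha one_pos) h
    rw [lt_iSup_iff] at hlt
    obtain ⟨s, hs⟩ := hlt
    obtain ⟨k, hk⟩ := s.exists_nat_subset_range
    refine ⟨k, ?_⟩
    have : ((a - 1 : ℕ) : ℕ∞) < ((∑ i ∈ s, f i : ℕ) : ℕ∞) := by rwa [Nat.cast_sum]
    have h2 : a - 1 < ∑ i ∈ s, f i := by exact_mod_cast this
    have h3 : a ≤ ∑ i ∈ s, f i := by omega
    exact h3.trans (Finset.sum_le_sum_of_subset hk)

lemma myENat.lt_one_add {a : ℕ} {t : ℕ∞} (h : (a : ℕ∞) ≤ t) : (a : ℕ∞) < 1 + t := by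
  rcases eq_or_ne t ⊤ with rfl | ht
  · simp [lt_top_iff_ne_top]
  · rw [add_comm, ENat.lt_add_one_iff ht]; exact h

lemma myENat.le_of_lt_one_add {a : ℕ} {t : ℕ∞} (h : (a : ℕ∞) < 1 + t) : (a : ℕ∞) ≤ t := by
  rcases eq_or_ne t ⊤ with rfl | ht
  · exact le_top
  · rwa [add_comm, ENat.lt_add_one_iff ht] at h

lemma myfact_prod_pow (m : ℕ) (e : ℕ → ℕ) (q : ℕ) :
    (∏ i ∈ range m, Nat.nth Nat.Prime i ^ e i).factorization q
      = ∑ i ∈ range m, if q = Nat.nth Nat.Prime i then e i else 0 := by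
  rw [Nat.factorization_prod (fun i _ => pow_ne_zero _ (Nat.prime_nth_prime i).ne_zero)]
  rw [Finsupp.finset_sum_apply]
  refine Finset.sum_congr rfl fun i _ => ?_
  rw [(Nat.prime_nth_prime i).factorization_pow, Finsupp.single_apply]
  exact if_congr eq_comm rfl rfl

lemma myfact_prod_pow_nth {m j : ℕ} (e : ℕ → ℕ) (hj : j < m) :
    (∏ i ∈ range m, Nat.nth Nat.Prime i ^ e i).factorization (Nat.nth Nat.Prime j) = e j := by
  rw [myfact_prod_pow]
  rw [Finset.sum_eq_single j]
  · simp
  · intro i _ hij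
    have : Nat.nth Nat.Prime j ≠ Nat.nth Nat.Prime i := fun h =>
      hij ((Nat.nth_injective Nat.infinite_setOf_prime h).symm)
    simp [this]
  · intro h; exact absurd (Finset.mem_range.2 hj) h

lemma myfact_sum (k : ℕ) (n : ℕ → ℕ+) (q : ℕ) :
    (∏ i ∈ range k, (n i : ℕ)).factorization q
      = ∑ i ∈ range k, ((n i : ℕ)).factorization q := by
  rw [Nat.factorization_prod (fun i _ => (n i).ne_zero), Finsupp.finset_sum_apply]

lemma myratstep (p : ℤ) (d D : ℕ) (hd : d ∣ D) (hD : D ≠ 0) :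
    (p : ℚ) / (d : ℚ) = ((p * (D / d : ℕ) : ℤ) : ℚ) / (D : ℚ) := by
  obtain ⟨c, rfl⟩ := hd
  have hd0 : d ≠ 0 := by rintro rfl; simp at hD
  have hc0 : c ≠ 0 := by rintro rfl; simp at hD
  rw [Nat.mul_div_cancel_left c (Nat.pos_of_ne_zero hd0)]
  push_cast
  rw [mul_div_mul_right _ _ (by exact_mod_cast hc0 : (c : ℚ) ≠ 0)]

/-- G(n) = Q(k), where k j = 1 + Σᵢ v_{p_j}(n i) is one more than the total number of times
the j-th prime divides the terms of the sequence n, the sum being taken in ℕ∞ (so that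
k j = ∞ when the total order is unbounded). -/
theorem gset_eq_qset_valuations (n : ℕ → ℕ+) :
    GSet n =
      QSet (fun j =>
        1 + ∑' i : ℕ, (((n i : ℕ).factorization (Nat.nth Nat.Prime j) : ℕ∞))) := by
  ext x
  constructor
  · rintro ⟨p, k, rfl⟩
    set P := ∏ i ∈ range k, (n i : ℕ) with hPdef
    have hP : P ≠ 0 := Finset.prod_ne_zero_iff.2 fun i _ => (n i).ne_zero
    set e : ℕ → ℕ := fun j => P.factorization (Nat.nth Nat.Prime j) with he
    set m := P + 1 with hm
    set Q := ∏ j ∈ range m, Nat.nth Nat.Prime j ^ e j with hQdef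
    have hQ : Q ≠ 0 :=
      Finset.prod_ne_zero_iff.2 fun j _ => pow_ne_zero _ (Nat.prime_nth_prime j).ne_zero
    have hdvd : P ∣ Q := by
      rw [← Nat.factorization_le_iff_dvd hP hQ]
      intro q
      by_cases hq : P.factorization q = 0
      · simp [hq]
      · have hqp : q.Prime := Nat.prime_of_mem_primeFactors
          (by rwa [← Nat.support_factorization, Finsupp.mem_support_iff])
        have hqd : q ∣ P := Nat.dvd_of_mem_primeFactors
          (by rwa [← Nat.support_factorization, Finsupp.mem_support_iff])
        have hjm : Nat.count Nat.Prime q < m := by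
          have h1 : Nat.count Nat.Prime q ≤ q := Nat.count_le Nat.Prime
          have h2 : q ≤ P := Nat.le_of_dvd (Nat.pos_of_ne_zero hP) hqd
          omega
        have hnth : Nat.nth Nat.Prime (Nat.count Nat.Prime q) = q := Nat.nth_count hqp
        have : Q.factorization q = P.factorization q := by
          rw [hQdef, ← hnth, myfact_prod_pow_nth e hjm, he]
        exact this.ge
    refine ⟨p * (Q / P : ℕ), m, e, ?_, ?_⟩
    · intro j _
      refine myENat.lt_one_add ?_
      have h1 : e j = ∑ i ∈ range k, ((n i : ℕ)).factorization (Nat.nth Nat.Prime j) :=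
        myfact_sum k n _
      have h2 : (e j : ℕ∞)
          = ∑ i ∈ range k, (((n i : ℕ).factorization (Nat.nth Nat.Prime j) : ℕ∞)) := by
        rw [h1, Nat.cast_sum]
      rw [h2]
      exact myENat.sum_le_tsum _ _
    · have hcast1 : ∏ i ∈ range k, ((n i : ℕ) : ℚ) = (P : ℚ) := by
        rw [hPdef, Nat.cast_prod]
      have hcast2 : ∏ j ∈ range m, (Nat.nth Nat.Prime j : ℚ) ^ e j = (Q : ℚ) := by
        rw [hQdef, Nat.cast_prod]
        exact Finset.prod_congr rfl fun j _ => by rw [Nat.cast_pow]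
      rw [hcast1, hcast2]
      exact myratstep p P Q hdvd hQ
  · rintro ⟨p, m, e, hb, rfl⟩
    set D := ∏ j ∈ range m, Nat.nth Nat.Prime j ^ e j with hDdef
    have hD : D ≠ 0 :=
      Finset.prod_ne_zero_iff.2 fun j _ => pow_ne_zero _ (Nat.prime_nth_prime j).ne_zero
    have H : ∀ j, ∃ kj, j < m →
        e j ≤ ∑ i ∈ range kj, ((n i : ℕ)).factorization (Nat.nth Nat.Prime j) := by
      intro j
      by_cases hj : j < m
      · obtain ⟨kj, hkj⟩ := myENat.exists_range_sum
          (fun i => ((n i : ℕ)).factorization (Nat.nth Nat.Prime j)) (e j)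
          (myENat.le_of_lt_one_add (hb j hj))
        exact ⟨kj, fun _ => hkj⟩
      · exact ⟨0, fun h => absurd h hj⟩
    choose K hK using H
    set kk := (range m).sup K with hkk
    set P := ∏ i ∈ range kk, (n i : ℕ) with hPdef
    have hP : P ≠ 0 := Finset.prod_ne_zero_iff.2 fun i _ => (n i).ne_zero
    have hdvd : D ∣ P := by
      rw [← Nat.factorization_le_iff_dvd hD hP]
      intro q
      rw [hDdef, myfact_prod_pow]
      by_cases hq : ∃ j ∈ range m, q = Nat.nth Nat.Prime j
      · obtain ⟨j, hjm, rfl⟩ := hq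
        have hjm' : j < m := Finset.mem_range.1 hjm
        have hsum : (∑ i ∈ range m,
            if Nat.nth Nat.Prime j = Nat.nth Nat.Prime i then e i else 0) = e j := by
          rw [Finset.sum_eq_single j]
          · simp
          · intro i _ hij
            have : Nat.nth Nat.Prime j ≠ Nat.nth Nat.Prime i := fun h =>
              hij ((Nat.nth_injective Nat.infinite_setOf_prime h).symm)
            simp [this]
          · intro h; exact absurd hjm h
        rw [hsum, hPdef, myfact_sum]
        refine (hK j hjm').trans (Finset.sum_le_sum_of_subset ?_)
        exact Finset.range_subset_range.2 (Finset.le_sup hjm)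
      · push_neg at hq
        have : (∑ i ∈ range m, if q = Nat.nth Nat.Prime i then e i else 0) = 0 :=
          Finset.sum_eq_zero fun i hi => by simp [hq i hi]
        rw [this]
        exact Nat.zero_le _
    refine ⟨p * (P / D : ℕ), kk, ?_⟩
    have hcast1 : ∏ i ∈ range kk, ((n i : ℕ) : ℚ) = (P : ℚ) := by
      rw [hPdef, Nat.cast_prod]
    have hcast2 : ∏ j ∈ range m, (Nat.nth Nat.Prime j : ℚ) ^ e j = (D : ℚ) := by
      rw [hDdef, Nat.cast_prod]
      exact Finset.prod_congr rfl fun j _ => by rw [Nat.cast_pow]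
    rw [hcast1, hcast2]
    exact myratstep p D P hdvd hP
end

section
/- Let n : ℕ → ℕ+ be a sequence of positive integers and let σ : ℕ → ℕ be a bijection. Then G(n ∘ σ) = G(n) as subgroups of ℚ; that is, reordering the sequence n does not change the subgroup G(n). -/
lemma gset_subset_of_dvd (m n : ℕ → ℕ+)
    (h : ∀ k, ∃ N, (∏ i ∈ Finset.range k, (m i : ℕ)) ∣ ∏ i ∈ Finset.range N, (n i : ℕ)) :
    GSet m ⊆ GSet n := by
  rintro x ⟨p, k, rfl⟩
  obtain ⟨N, c, hc⟩ := h k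
  refine ⟨p * c, N, ?_⟩
  have hd : (∏ i ∈ Finset.range k, (m i : ℕ)) ≠ 0 := by positivity
  have hD : (∏ i ∈ Finset.range N, (n i : ℕ)) ≠ 0 := by positivity
  have hcne : c ≠ 0 := by rintro rfl; simp [hc] at hD
  have : (∏ i ∈ Finset.range N, ((n i : ℕ) : ℚ)) =
      (∏ i ∈ Finset.range k, ((m i : ℕ) : ℚ)) * (c : ℚ) := by
    rw [← Nat.cast_prod, ← Nat.cast_prod, hc, Nat.cast_mul]
  rw [this]
  push_cast
  rw [mul_div_mul_right _ _ (by exact_mod_cast hcne)]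

/-- Reordering the sequence n by a bijection σ does not change the subgroup G(n). -/
theorem gset_comp_bijective_eq (n : ℕ → ℕ+) (σ : ℕ → ℕ) (hσ : Function.Bijective σ) :
    GSet (n ∘ σ) = GSet n := by
  let e := Equiv.ofBijective σ hσ
  apply Set.Subset.antisymm
  · apply gset_subset_of_dvd
    intro k
    refine ⟨(Finset.range k).sup σ + 1, ?_⟩
    have himg : (∏ i ∈ Finset.range k, ((n ∘ σ) i : ℕ)) =
        ∏ j ∈ (Finset.range k).image σ, (n j : ℕ) :=
      by simp only [Function.comp_apply]
         exact (Finset.prod_image (f := fun j => (n j : ℕ)) (fun a _ b _ hab => hσ.1 hab)).symm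
    rw [himg]
    apply Finset.prod_dvd_prod_of_subset
    intro j hj
    obtain ⟨i, hi, rfl⟩ := Finset.mem_image.mp hj
    exact Finset.mem_range.mpr (Nat.lt_succ_of_le (Finset.le_sup hi))
  · apply gset_subset_of_dvd
    intro k
    refine ⟨(Finset.range k).sup (fun j => e.symm j) + 1, ?_⟩
    set N := (Finset.range k).sup (fun j => e.symm j) + 1
    have himg : (∏ i ∈ Finset.range N, ((n ∘ σ) i : ℕ)) =
        ∏ j ∈ (Finset.range N).image σ, (n j : ℕ) :=
      by simp only [Function.comp_apply]
         exact (Finset.prod_image (f := fun j => (n j : ℕ)) (fun a _ b _ hab => hσ.1 hab)).symm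
    rw [himg]
    apply Finset.prod_dvd_prod_of_subset
    intro j hj
    apply Finset.mem_image.mpr
    refine ⟨e.symm j, Finset.mem_range.mpr (Nat.lt_succ_of_le (Finset.le_sup hj)), ?_⟩
    exact e.apply_symm_apply j
end

section
/- Consider the group G presented with generators s_i and z_i for i ∈ ℕ, and relators: s_0; the commutators s_i z_i s_i^{-1} z_i^{-1}; the words (s_i^{-1} z_{i+1} s_i)(z_{i+1}^{-1} z_i)^{-1} (encoding s_i^{-1} z_{i+1} s_i = z_{i+1}^{-1} z_i); and the words s_{i+1}^{-1} s_i^2 z_i z_{i+1}^{-2} (encoding s_{i+1} = s_i^2 z_i z_{i+1}^{-2}), for all i ∈ ℕ. Then G is isomorphic to the additive group of dyadic rationals { p/2^k : p ∈ ℤ, k ∈ ℕ } ⊆ ℚ (viewed multiplicatively via Multiplicative); in particular G is abelian. -/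
/-- The set of dyadic rationals p / 2^k. -/
def dyadicSet : Set ℚ := {x | ∃ (p : ℤ) (k : ℕ), x = (p : ℚ) / 2 ^ k}

/-- The generator s_i of the free group on the generators s_i, z_i (i ∈ ℕ). -/
def s (i : ℕ) : FreeGroup (ℕ ⊕ ℕ) := FreeGroup.of (Sum.inl i)

/-- The generator z_i of the free group on the generators s_i, z_i (i ∈ ℕ). -/
def z (i : ℕ) : FreeGroup (ℕ ⊕ ℕ) := FreeGroup.of (Sum.inr i)

/-- Relators for the unknotted embedding of the dyadic solenoid: s_0; [s_i, z_i];
s_i⁻¹ z_{i+1} s_i = z_{i+1}⁻¹ z_i; and s_{i+1} = s_i² z_i z_{i+1}⁻². -/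
def unknotRels : Set (FreeGroup (ℕ ⊕ ℕ)) :=
  {s 0} ∪
    {r | ∃ i : ℕ,
      r = s i * z i * (s i)⁻¹ * (z i)⁻¹ ∨
      r = ((s i)⁻¹ * z (i + 1) * s i) * ((z (i + 1))⁻¹ * z i)⁻¹ ∨
      r = (s (i + 1))⁻¹ * (s i) ^ 2 * z i * (z (i + 1)) ^ (-2 : ℤ)}

/-! The relator `s₀` starts an induction: if `sᵢ = 1`, the conjugation relation reads
`z_{i+1} = z_{i+1}⁻¹ zᵢ`, i.e. `zᵢ = z_{i+1}²`, and then the last relation gives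
`s_{i+1} = z_{i+1}² z_{i+1}⁻² = 1`. So the group is the increasing union of the cyclic groups
`⟨zₖ⟩` with `zₖ = z_{k+1}²`, every element is a power `zₖ ^ p`, and `sᵢ ↦ 0`, `zₖ ↦ 2⁻ᵏ`
is an isomorphism onto the dyadic rationals. -/

namespace UnknotSolenoid

def S (i : ℕ) : PresentedGroup unknotRels := PresentedGroup.of (Sum.inl i)

def Z (i : ℕ) : PresentedGroup unknotRels := PresentedGroup.of (Sum.inr i)

theorem S_zero : S 0 = 1 :=
  PresentedGroup.one_of_mem (Or.inl rfl)

theorem S_inv_mul_Z_succ_mul_S (i : ℕ) : (S i)⁻¹ * Z (i + 1) * S i = (Z (i + 1))⁻¹ * Z i := by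
  simpa [S, Z, PresentedGroup.of, s, z] using
    PresentedGroup.mk_eq_mk_of_mul_inv_mem (rels := unknotRels) (Or.inr ⟨i, Or.inr (Or.inl rfl)⟩)

theorem S_succ (i : ℕ) : S (i + 1) = S i ^ 2 * Z i * Z (i + 1) ^ (-2 : ℤ) := by
  have h := PresentedGroup.one_of_mem (rels := unknotRels) (Or.inr ⟨i, Or.inr (Or.inr rfl)⟩)
  simp only [map_mul, map_inv, map_pow, map_zpow, mul_assoc] at h
  rw [mul_assoc]
  exact inv_mul_eq_one.1 h

theorem Z_eq_sq_of_S_eq_one {i : ℕ} (hi : S i = 1) : Z i = Z (i + 1) ^ 2 := by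
  have h := S_inv_mul_Z_succ_mul_S i
  rw [hi, inv_one, one_mul, mul_one, eq_inv_mul_iff_mul_eq] at h
  rw [← h, sq]

theorem S_eq_one (i : ℕ) : S i = 1 := by
  induction i with
  | zero => exact S_zero
  | succ i ih => rw [S_succ, ih, Z_eq_sq_of_S_eq_one ih]; group

theorem Z_eq_sq (i : ℕ) : Z i = Z (i + 1) ^ 2 :=
  Z_eq_sq_of_S_eq_one (S_eq_one i)

theorem zpowers_Z_mono : Monotone fun k => Subgroup.zpowers (Z k) :=
  monotone_nat_of_le_succ fun k =>
    Subgroup.zpowers_le.2 (Z_eq_sq k ▸ Subgroup.pow_mem _ (Subgroup.mem_zpowers _) 2)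

theorem exists_eq_Z_zpow (g : PresentedGroup unknotRels) : ∃ (k : ℕ) (p : ℤ), g = Z k ^ p := by
  have hg : g ∈ ⨆ k, Subgroup.zpowers (Z k) := by
    refine PresentedGroup.generated_by _ _ (fun j => ?_) g
    rcases j with i | i
    · change S i ∈ _
      rw [S_eq_one]
      exact one_mem _
    · exact Subgroup.mem_iSup_of_mem i (Subgroup.mem_zpowers (Z i))
  obtain ⟨k, p, hp⟩ := (Subgroup.mem_iSup_of_directed zpowers_Z_mono.directed_le).1 hg
  exact ⟨k, p, hp.symm⟩

section Lift

variable {M : Type*} [Group M] (w : ℕ → M) (hw : ∀ i, w (i + 1) ^ 2 = w i)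

/-- Sending every `sᵢ` to `1` turns each relator into a word in a single letter, so no
commutativity of `M` is needed. -/
def lift : PresentedGroup unknotRels →* M :=
  PresentedGroup.toGroup (f := Sum.elim 1 w) <| by
    rintro r (rfl | ⟨i, rfl | rfl | rfl⟩)
    · simp [s]
    · simp [s, z]
    · simp [s, z, ← hw i]
      group
    · simp [s, z, ← hw i]

theorem lift_Z (k : ℕ) : lift w hw (Z k) = w k :=
  PresentedGroup.toGroup.of _

theorem injective_lift (hw₀ : ∀ (k : ℕ) (p : ℤ), w k ^ p = 1 → p = 0) :
    Function.Injective (lift w hw) := by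
  refine (injective_iff_map_eq_one _).2 fun g hg => ?_
  obtain ⟨k, p, rfl⟩ := exists_eq_Z_zpow g
  rw [map_zpow, lift_Z] at hg
  rw [hw₀ k p hg, zpow_zero]

theorem surjective_lift (hw₁ : ∀ x : M, ∃ (k : ℕ) (p : ℤ), x = w k ^ p) :
    Function.Surjective (lift w hw) := fun x => by
  obtain ⟨k, p, rfl⟩ := hw₁ x
  exact ⟨Z k ^ p, by rw [map_zpow, lift_Z]⟩

end Lift

theorem inv_two_pow_mem_dyadicSet (k : ℕ) : ((2 : ℚ) ^ k)⁻¹ ∈ dyadicSet :=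
  ⟨1, k, by simp⟩

section Dyadic

variable {H : AddSubgroup ℚ} (hH : (H : Set ℚ) = dyadicSet)

def dyadicUnit (k : ℕ) : Multiplicative H :=
  .ofAdd ⟨(2 ^ k)⁻¹, by rw [← SetLike.mem_coe, hH]; exact inv_two_pow_mem_dyadicSet k⟩

theorem coe_toAdd_dyadicUnit_zpow (k : ℕ) (p : ℤ) :
    ((Multiplicative.toAdd (dyadicUnit hH k ^ p) : H) : ℚ) = p / 2 ^ k := by
  simp [dyadicUnit, div_eq_mul_inv]

theorem dyadicUnit_succ_sq (k : ℕ) : dyadicUnit hH (k + 1) ^ 2 = dyadicUnit hH k := by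
  apply Multiplicative.toAdd.injective
  apply Subtype.ext
  simp only [dyadicUnit, pow_succ, pow_zero, one_mul, mul_inv_rev, toAdd_mul, toAdd_ofAdd,
    AddMemClass.mk_add_mk]
  ring

theorem eq_zero_of_dyadicUnit_zpow_eq_one {k : ℕ} {p : ℤ} (h : dyadicUnit hH k ^ p = 1) :
    p = 0 := by
  have h' := congrArg (fun x : Multiplicative H => ((Multiplicative.toAdd x : H) : ℚ)) h
  simp only [coe_toAdd_dyadicUnit_zpow, toAdd_one, ZeroMemClass.coe_zero] at h'
  simpa using h'

theorem exists_eq_dyadicUnit_zpow (x : Multiplicative H) :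
    ∃ (k : ℕ) (p : ℤ), x = dyadicUnit hH k ^ p := by
  obtain ⟨p, k, hx⟩ : ((Multiplicative.toAdd x : H) : ℚ) ∈ dyadicSet :=
    hH ▸ (Multiplicative.toAdd x).2
  exact ⟨k, p, Multiplicative.toAdd.injective (Subtype.ext (by rw [coe_toAdd_dyadicUnit_zpow, hx]))⟩

end Dyadic

end UnknotSolenoid

/-- The group presented by the relations of the unknotted dyadic solenoid complement is
isomorphic to the additive group of dyadic rationals (viewed multiplicatively); in
particular it is abelian. -/
theorem presentedGroup_unknot_dyadic (H : AddSubgroup ℚ) (hH : (H : Set ℚ) = dyadicSet) :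
    Nonempty (PresentedGroup unknotRels ≃* Multiplicative H) ∧
    ∀ a b : PresentedGroup unknotRels, a * b = b * a := by
  open UnknotSolenoid in
  have hφ : Function.Bijective (lift (dyadicUnit hH) (dyadicUnit_succ_sq hH)) :=
    ⟨injective_lift _ _ fun _ _ => eq_zero_of_dyadicUnit_zpow_eq_one hH,
      surjective_lift _ _ (exists_eq_dyadicUnit_zpow hH)⟩
  refine ⟨⟨MulEquiv.ofBijective _ hφ⟩, fun a b => hφ.1 ?_⟩
  rw [map_mul, map_mul, mul_comm]
end

section
/- Consider the group G presented with generators s_i and z_i for i ∈ ℕ, and relators: s_0; the commutators s_i z_i s_i^{-1} z_i^{-1}; the words (s_i^{-1} z_{i+1} s_i)(z_i^{-1} z_{i+1}^{-1} z_i^2)^{-1} (encoding s_i^{-1} z_{i+1} s_i = z_i^{-1} z_{i+1}^{-1} z_i^2); and the words s_{i+1}^{-1} s_i^2 z_i^3 z_{i+1}^{-6} (encoding s_{i+1} = s_i^2 z_i^3 z_{i+1}^{-6}), for all i ∈ ℕ. Then there exists a group homomorphism φ : G → Equiv.Perm ℕ with φ(z_i) equal to the 3-cycle (i, i+1, i+2)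 and φ(s_i) = 1 for all i, and consequently G is not abelian (since the 3-cycles (0,1,2) and (1,2,3) do not commute). -/
/-- Relators for the dyadic solenoid embedded with a trefoil braid at each level: s_0;
[s_i, z_i]; s_i⁻¹ z_{i+1} s_i = z_i⁻¹ z_{i+1}⁻¹ z_i²; and s_{i+1} = s_i² z_i³ z_{i+1}⁻⁶. -/
def trefoilRels : Set (FreeGroup (ℕ ⊕ ℕ)) :=
  {s 0} ∪
    {r | ∃ i : ℕ,
      r = s i * z i * (s i)⁻¹ * (z i)⁻¹ ∨
      r = ((s i)⁻¹ * z (i + 1) * s i) * ((z i)⁻¹ * (z (i + 1))⁻¹ * (z i) ^ 2)⁻¹ ∨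
      r = (s (i + 1))⁻¹ * (s i) ^ 2 * (z i) ^ 3 * (z (i + 1)) ^ (-6 : ℤ)}

/-! Once every `s_i` is killed, the relators follow from `z_i ^ 3 = 1` and
`z_{i+1} z_i z_{i+1} = z_i ^ 2`, and the 3-cycles `(i, i+1, i+2)` satisfy both. Since `(0, 1, 2)`
and `(1, 2, 3)` do not commute, neither do `z_0` and `z_1`. -/

open Equiv

theorem lift_trefoilRels_eq_one {G : Type*} [Group G] {t : ℕ → G} (hcube : ∀ i, t i ^ 3 = 1)
    (hbraid : ∀ i, t (i + 1) * t i * t (i + 1) = t i * t i) :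
    ∀ r ∈ trefoilRels, FreeGroup.lift (Sum.elim 1 t) r = 1 := by
  rintro r (hr | ⟨i, rfl | rfl | rfl⟩)
  · simp [Set.mem_singleton_iff.mp hr, s]
  · simp [s, z]
  · have hconj : (t i)⁻¹ * (t (i + 1))⁻¹ * t i ^ 2 = t (i + 1) := by
      rw [sq, ← hbraid i]; group
    simp only [s, z, map_mul, map_inv, map_pow, FreeGroup.lift_apply_of, Sum.elim_inl,
      Sum.elim_inr, Pi.one_apply, inv_one, one_mul, mul_one, hconj, mul_inv_cancel]
  · have h6 : t (i + 1) ^ 6 = 1 := by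
      rw [show 6 = 3 * 2 from rfl, pow_mul, hcube, one_pow]
    simp [s, z, hcube, h6]

def threeCycle (i : ℕ) : Perm ℕ := swap i (i + 1) * swap (i + 1) (i + 2)

theorem threeCycle_apply (i x : ℕ) : threeCycle i x =
    if x = i then i + 1 else if x = i + 1 then i + 2 else if x = i + 2 then i else x := by
  simp only [threeCycle, Perm.mul_apply, swap_apply_def]
  split_ifs <;> omega

theorem eq_threeCycle {σ : Perm ℕ} {i : ℕ} (h₀ : σ i = i + 1) (h₁ : σ (i + 1) = i + 2)
    (h₂ : σ (i + 2) = i) (hfix : ∀ x, x ≠ i → x ≠ i + 1 → x ≠ i + 2 → σ x = x) :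
    σ = threeCycle i := by
  ext x
  rw [threeCycle_apply]
  split_ifs with hx₀ hx₁ hx₂
  · rw [hx₀, h₀]
  · rw [hx₁, h₁]
  · rw [hx₂, h₂]
  · exact hfix x hx₀ hx₁ hx₂

theorem threeCycle_pow_three (i : ℕ) : threeCycle i ^ 3 = 1 := by
  ext x
  simp only [pow_succ, pow_zero, one_mul, Perm.mul_apply, Perm.one_apply, threeCycle_apply]
  split_ifs <;> omega

theorem threeCycle_succ_mul_mul_succ (i : ℕ) :
    threeCycle (i + 1) * threeCycle i * threeCycle (i + 1) = threeCycle i * threeCycle i := by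
  ext x
  simp only [Perm.mul_apply, threeCycle_apply]
  split_ifs <;> omega

theorem threeCycle_zero_mul_one_ne : threeCycle 0 * threeCycle 1 ≠ threeCycle 1 * threeCycle 0 :=
  fun h => by simpa [threeCycle_apply] using congrArg (· 0) h

/-- There is a homomorphism from the presented group of the trefoil-embedded dyadic solenoid
complement to the permutations of ℕ sending each z_i to the 3-cycle (i, i+1, i+2) and each
s_i to the identity; consequently the presented group is not abelian. -/
theorem presentedGroup_trefoil_nonabelian (c : ℕ → Equiv.Perm ℕ)
    (hc : ∀ i : ℕ, c i i = i + 1 ∧ c i (i + 1) = i + 2 ∧ c i (i + 2) = i ∧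
      ∀ x : ℕ, x ≠ i → x ≠ i + 1 → x ≠ i + 2 → c i x = x) :
    (∃ φ : PresentedGroup trefoilRels →* Equiv.Perm ℕ,
      (∀ i : ℕ, φ (PresentedGroup.of (Sum.inr i)) = c i) ∧
      (∀ i : ℕ, φ (PresentedGroup.of (Sum.inl i)) = 1)) ∧
    ¬ (∀ a b : PresentedGroup trefoilRels, a * b = b * a) := by
  obtain rfl : c = threeCycle := funext fun i =>
    eq_threeCycle (hc i).1 (hc i).2.1 (hc i).2.2.1 (hc i).2.2.2
  let φ := PresentedGroup.toGroup
    (lift_trefoilRels_eq_one threeCycle_pow_three threeCycle_succ_mul_mul_succ)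
  refine ⟨⟨φ, fun _ => PresentedGroup.toGroup.of _, fun _ => PresentedGroup.toGroup.of _⟩,
    fun hcomm => threeCycle_zero_mul_one_ne ?_⟩
  simpa [φ, PresentedGroup.toGroup.of] using
    congrArg φ (hcomm (.of (.inr 0)) (.of (.inr 1)))
end

section
/- Consider the group G presented with generators s_i and z_i for i ∈ ℕ, and relators: s_0; the commutators s_i z_i s_i^{-1} z_i^{-1}; the words (s_i^{-1} z_{i+1} s_i)(z_i^{-1} z_{i+1}^{-1} z_i^2)^{-1}; and the words s_{i+1}^{-1} s_i^2 z_i^3 z_{i+1}^{-6}, for all i ∈ ℕ. Then the abelianization of G is isomorphic to the additive group of dyadic rationals { p/2^k : p ∈ ℤ, k ∈ ℕ } ⊆ ℚ. -/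
/-! In a commutative quotient the conjugation relator becomes `z_i = z_{i+1}^2`, and the last relator
then reads `s_{i+1} = s_i^2`; with `s_0 = 1` every `s_i` dies. The abelianization is therefore
generated by the halving sequence `z_0 = z_1^2 = z_2^4 = …`, so each of its elements is a single
power `z_k^p`. Sending `z_k ↦ 1/2^k` maps it onto the dyadic rationals, and injectively, because
`z_k^p ↦ p/2^k` vanishes only for `p = 0`. -/

section HalvingSequence

variable {G : Type*} [CommGroup G] {a : ℕ → G}

theorem pow_two_pow_of_sq_succ (ha : ∀ k, a (k + 1) ^ 2 = a k) (k n : ℕ) :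
    a (k + n) ^ 2 ^ n = a k := by
  induction n with
  | zero => simp
  | succ n ih => rw [← ih, ← ha (k + n), ← pow_mul, ← pow_succ', add_assoc]

theorem zpow_mul_zpow_of_sq_succ (ha : ∀ k, a (k + 1) ^ 2 = a k) (k n : ℕ) (p q : ℤ) :
    a k ^ p * a n ^ q = a (k + n) ^ (p * 2 ^ n + q * 2 ^ k) := by
  conv_lhs => rw [← pow_two_pow_of_sq_succ ha k n, ← pow_two_pow_of_sq_succ ha n k, add_comm n k]
  rw [zpow_add, mul_comm p, mul_comm q, zpow_mul, zpow_mul]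
  norm_cast

theorem exists_zpow_eq_of_mem_closure_range (ha : ∀ k, a (k + 1) ^ 2 = a k) {g : G}
    (hg : g ∈ Subgroup.closure (Set.range a)) : ∃ (k : ℕ) (p : ℤ), a k ^ p = g := by
  induction hg using Subgroup.closure_induction with
  | mem _ hx => obtain ⟨k, rfl⟩ := hx; exact ⟨k, 1, zpow_one _⟩
  | one => exact ⟨0, 0, zpow_zero _⟩
  | mul _ _ _ _ hx hy =>
    obtain ⟨k, p, rfl⟩ := hx
    obtain ⟨n, q, rfl⟩ := hy
    exact ⟨k + n, _, (zpow_mul_zpow_of_sq_succ ha k n p q).symm⟩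
  | inv _ _ hx => obtain ⟨k, p, rfl⟩ := hx; exact ⟨k, -p, zpow_neg _ _⟩

end HalvingSequence

theorem conj_mul_inv_eq_sq_mul_inv {M : Type*} [CommGroup M] (x y u : M) :
    u⁻¹ * y * u * (x⁻¹ * y⁻¹ * x ^ 2)⁻¹ = y ^ 2 * x⁻¹ := by
  simp [pow_two, mul_comm, mul_left_comm, mul_assoc]

theorem map_trefoilRels_eq_one_iff {M : Type*} [CommGroup M] (f : FreeGroup (ℕ ⊕ ℕ) →* M) :
    (∀ r ∈ trefoilRels, f r = 1) ↔
      f (s 0) = 1 ∧ ∀ i, f (z (i + 1)) ^ 2 = f (z i) ∧ f (s (i + 1)) = f (s i) ^ 2 := by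
  constructor
  · intro h
    have hz (i : ℕ) : f (z (i + 1)) ^ 2 = f (z i) := by
      have := h _ (Or.inr ⟨i, Or.inr (Or.inl rfl)⟩)
      simp only [map_mul, map_inv, map_pow] at this
      rwa [conj_mul_inv_eq_sq_mul_inv, mul_inv_eq_one] at this
    refine ⟨h _ (Or.inl rfl), fun i => ⟨hz i, ?_⟩⟩
    have := h _ (Or.inr ⟨i, Or.inr (Or.inr rfl)⟩)
    simp only [map_mul, map_inv, map_pow, map_zpow, ← hz i] at this
    rw [← inv_mul_eq_one, ← this]
    group
  · rintro ⟨h0, h⟩ r (rfl | ⟨i, rfl | rfl | rfl⟩)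
    · exact h0
    · simp
    · simp only [map_mul, map_inv, map_pow]
      rw [conj_mul_inv_eq_sq_mul_inv, (h i).1, mul_inv_cancel]
    · simp only [map_mul, map_inv, map_pow, map_zpow]
      rw [(h i).2, ← (h i).1]
      group

abbrev TrefoilAb := Abelianization (PresentedGroup trefoilRels)

namespace TrefoilAb

def mk : FreeGroup (ℕ ⊕ ℕ) →* TrefoilAb := Abelianization.of.comp (PresentedGroup.mk trefoilRels)

theorem mk_surjective : Function.Surjective mk :=
  (QuotientGroup.mk'_surjective _).comp (PresentedGroup.mk_surjective trefoilRels)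

theorem mk_rel : ∀ r ∈ trefoilRels, mk r = 1 := fun _ hr => by
  simp [mk, PresentedGroup.one_of_mem hr]

def gen (k : ℕ) : TrefoilAb := mk (z k)

theorem gen_succ_sq (k : ℕ) : gen (k + 1) ^ 2 = gen k :=
  (((map_trefoilRels_eq_one_iff mk).1 mk_rel).2 k).1

theorem mk_s (i : ℕ) : mk (s i) = 1 := by
  obtain ⟨h0, h⟩ := (map_trefoilRels_eq_one_iff mk).1 mk_rel
  induction i with
  | zero => exact h0
  | succ i ih => rw [(h i).2, ih, one_pow]

theorem closure_range_gen : Subgroup.closure (Set.range gen) = ⊤ := by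
  have : (⊤ : Subgroup (FreeGroup (ℕ ⊕ ℕ))) ≤ (Subgroup.closure (Set.range gen)).comap mk := by
    rw [← FreeGroup.closure_range_of, Subgroup.closure_le]
    rintro _ ⟨i | k, rfl⟩
    · change mk (s i) ∈ Subgroup.closure _
      rw [mk_s]
      exact one_mem _
    · exact Subgroup.subset_closure ⟨k, rfl⟩
  rw [eq_top_iff]
  rintro g -
  obtain ⟨w, rfl⟩ := mk_surjective g
  exact this trivial

theorem exists_gen_zpow_eq (g : TrefoilAb) : ∃ (k : ℕ) (p : ℤ), gen k ^ p = g :=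
  exists_zpow_eq_of_mem_closure_range gen_succ_sq (closure_range_gen ▸ Subgroup.mem_top g)

def lift {M : Type*} [CommGroup M] (m : ℕ → M) (hm : ∀ k, m (k + 1) ^ 2 = m k) :
    TrefoilAb →* M :=
  Abelianization.lift <| PresentedGroup.toGroup (f := Sum.elim 1 m) <|
    (map_trefoilRels_eq_one_iff _).2 ⟨by simp [s], fun i => by simp [s, z, hm i]⟩

theorem lift_gen {M : Type*} [CommGroup M] (m : ℕ → M) (hm : ∀ k, m (k + 1) ^ 2 = m k)
    (k : ℕ) : lift m hm (gen k) = m k := by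
  simp only [lift, gen, mk, MonoidHom.comp_apply, Abelianization.lift_apply_of]
  exact PresentedGroup.toGroup.of _

end TrefoilAb

section Dyadic

variable {H : AddSubgroup ℚ} (hH : ∀ k : ℕ, ((2 : ℚ) ^ k)⁻¹ ∈ H)

def halfPow (k : ℕ) : Multiplicative H := Multiplicative.ofAdd ⟨(2 ^ k)⁻¹, hH k⟩

theorem halfPow_succ_sq (k : ℕ) : halfPow hH (k + 1) ^ 2 = halfPow hH k := by
  apply Multiplicative.toAdd.injective
  ext
  simp [halfPow, pow_succ]
  ring

theorem coe_toAdd_halfPow_zpow (k : ℕ) (p : ℤ) :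
    ((Multiplicative.toAdd (halfPow hH k ^ p) : H) : ℚ) = p / 2 ^ k := by
  simp [halfPow, div_eq_mul_inv]

theorem TrefoilAb.lift_halfPow_injective :
    Function.Injective (TrefoilAb.lift (halfPow hH) (halfPow_succ_sq hH)) := by
  rw [injective_iff_map_eq_one]
  intro g hg
  obtain ⟨k, p, rfl⟩ := TrefoilAb.exists_gen_zpow_eq g
  rw [map_zpow, TrefoilAb.lift_gen] at hg
  obtain rfl : p = 0 := by
    have h := congrArg (fun x => ((Multiplicative.toAdd x : H) : ℚ)) hg
    rw [coe_toAdd_halfPow_zpow] at h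
    simpa using h
  exact zpow_zero _

theorem TrefoilAb.lift_halfPow_surjective (hdyadic : ∀ x ∈ H, x ∈ dyadicSet) :
    Function.Surjective (TrefoilAb.lift (halfPow hH) (halfPow_succ_sq hH)) := by
  intro x
  obtain ⟨p, k, hx⟩ := hdyadic _ (Multiplicative.toAdd x).2
  refine ⟨TrefoilAb.gen k ^ p, Multiplicative.toAdd.injective (Subtype.ext ?_)⟩
  rw [map_zpow, TrefoilAb.lift_gen, coe_toAdd_halfPow_zpow, hx]

end Dyadic

/-- The abelianization of the presented group of the trefoil-embedded dyadic solenoid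
complement is isomorphic to the additive group of dyadic rationals (viewed
multiplicatively). -/
theorem abelianization_trefoil_dyadic (H : AddSubgroup ℚ) (hH : (H : Set ℚ) = dyadicSet) :
    Nonempty (Abelianization (PresentedGroup trefoilRels) ≃* Multiplicative H) := by
  have hhalf (k : ℕ) : ((2 : ℚ) ^ k)⁻¹ ∈ H := by
    rw [← SetLike.mem_coe, hH]
    exact ⟨1, k, by simp⟩
  have hdyadic (x : ℚ) (hx : x ∈ H) : x ∈ dyadicSet := hH ▸ hx
  exact ⟨MulEquiv.ofBijective _ ⟨TrefoilAb.lift_halfPow_injective hhalf,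
    TrefoilAb.lift_halfPow_surjective hhalf hdyadic⟩⟩
end
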